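/- arXiv:2109.09493 — 2 statements merged into one kernel-verified Lean document; each statement's English description precedes it below -/
import Mathlib

section
/- Suppose Assumption 2 holds, B_f is irreducible, and ρ(D_f^{-1}B_f) > 1. Then there exists z̃ = (x̃, w̃) ∈ ℝ^{n+m} with z̃ ≫ 0, x̃_i < 1 for every i ∈ {1,…,n}, and (−D_f + (I − X(z̃)) B_f) z̃ = 0; i.e., the layered networked SIWS model has a strictly positive (endemic) equilibrium lying in 𝒟. -/
/-!
The equilibria with `z ≥ 0` are the fixed points of the monotone map
`T z = B_f z / (d + χ B_f z)`, where `D_f = diag d` and `χ` is the indicator of the `x`-block.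
An eigenvalue `μ` of `D_f⁻¹ B_f` with `|μ| > 1` gives `u ≥ 0`, `u ≠ 0` with `|μ| D_f u ≤ B_f u`
(take moduli of an eigenvector), hence `ε u ≤ T (ε u)` for small `ε > 0`. Since the columns of
`A_w` sum to zero, the `w`-block is dominated by `diag (δ_w − diag A_w)` column by column, which
yields `b ≫ 0` with `T b ≤ b`. Tarski's fixed point theorem on `[ε u, b]` gives a fixed point
`z ≠ 0`; irreducibility of `B_f` makes it strictly positive, and `x_i = s / (δ_i + s) < 1`.
-/

open Matrix

variable {n m : ℕ}

/-- The block matrix `B_f = [[B, B_w],[C_w, A_w − diag A_w]]`. -/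
def BfM (B : Matrix (Fin n) (Fin n) ℝ) (Bw : Matrix (Fin n) (Fin m) ℝ)
    (Cw : Matrix (Fin m) (Fin n) ℝ) (Aw : Matrix (Fin m) (Fin m) ℝ) :
    Matrix (Fin n ⊕ Fin m) (Fin n ⊕ Fin m) ℝ :=
  Matrix.fromBlocks B Bw Cw (Aw - Matrix.diagonal (fun j => Aw j j))

/-- The block diagonal matrix `D_f = blockdiag(D, D_w − diag A_w)`. -/
def DfM (δ : Fin n → ℝ) (δw : Fin m → ℝ) (Aw : Matrix (Fin m) (Fin m) ℝ) :
    Matrix (Fin n ⊕ Fin m) (Fin n ⊕ Fin m) ℝ :=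
  Matrix.fromBlocks (Matrix.diagonal δ) 0 0 (Matrix.diagonal (fun j => δw j - Aw j j))

/-- `X(z) = diag(x_1,…,x_n,0,…,0)` for `z = (x,w)`. -/
def XzM (z : Fin n ⊕ Fin m → ℝ) :
    Matrix (Fin n ⊕ Fin m) (Fin n ⊕ Fin m) ℝ :=
  Matrix.diagonal (Sum.elim (fun a => z (Sum.inl a)) (fun _ => (0:ℝ)))

/-- A (nonnegative) square matrix is irreducible if for every pair of indices `i, j`
there is `k ≥ 1` with `(M^k) i j > 0`. -/
def MatIrred {N : Type*} [Fintype N] [DecidableEq N] (M : Matrix N N ℝ) : Prop :=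
  ∀ i j, ∃ k : ℕ, 1 ≤ k ∧ 0 < (M ^ k) i j

/-- The spectral radius of a real matrix: the supremum of the moduli of its
complex eigenvalues. -/
noncomputable def specRad {N : Type*} [Fintype N] [DecidableEq N] (M : Matrix N N ℝ) : ENNReal :=
  spectralRadius ℂ (M.map (algebraMap ℝ ℂ))

open Filter Topology

theorem exists_fixedPoint_of_monotoneOn_Icc {α : Type*} [ConditionallyCompleteLattice α]
    {f : α → α} {a b : α} (hab : a ≤ b) (hf : MonotoneOn f (Set.Icc a b))
    (ha : a ≤ f a) (hb : f b ≤ b) : ∃ z ∈ Set.Icc a b, f z = z := by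
  have : Fact (a ≤ b) := ⟨hab⟩
  have maps_to (z : α) (hz : z ∈ Set.Icc a b) : f z ∈ Set.Icc a b :=
    ⟨ha.trans (hf ⟨le_rfl, hab⟩ hz hz.1), (hf hz ⟨hab, le_rfl⟩ hz.2).trans hb⟩
  let g : Set.Icc a b →o Set.Icc a b :=
    ⟨fun z => ⟨f z, maps_to z z.2⟩, fun z z' h => hf z.2 z'.2 h⟩
  exact ⟨g.lfp, g.lfp.2, congrArg Subtype.val g.map_lfp⟩

theorem exists_mem_spectrum_one_lt_norm {𝕜 A : Type*} [NormedField 𝕜] [Ring A] [Algebra 𝕜 A]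
    {a : A} (ha : 1 < spectralRadius 𝕜 a) : ∃ μ ∈ spectrum 𝕜 a, 1 < ‖μ‖ := by
  obtain ⟨μ, hμ⟩ := lt_iSup_iff.mp ha
  obtain ⟨hmem, hlt⟩ := lt_iSup_iff.mp hμ
  exact ⟨μ, hmem, by exact_mod_cast hlt⟩

theorem div_add_mul_le_div_add_mul {s s' d χ : ℝ} (hs : 0 ≤ s) (hss' : s ≤ s') (hd : 0 < d)
    (hχ : 0 ≤ χ) : s / (d + χ * s) ≤ s' / (d + χ * s') := by
  rw [div_le_div_iff₀ (by positivity) (by nlinarith)]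
  nlinarith

theorem le_div_add_mul_of_le {a s d χ r : ℝ} (ha : 0 ≤ a) (hd : 0 < d) (hχ : 0 ≤ χ)
    (hr0 : 0 ≤ r) (has : r * (d * a) ≤ s) (hr : χ * (r * a) ≤ r - 1) :
    a ≤ s / (d + χ * s) := by
  have hra : 0 ≤ r * (d * a) := by positivity
  refine le_trans ?_ (div_add_mul_le_div_add_mul hra has hd hχ)
  rw [le_div_iff₀ (by positivity)]
  nlinarith [mul_nonneg ha hd.le]

namespace Matrix

section
variable {ι κ : Type*} [Fintype ι]

theorem mulVec_nonneg {A : Matrix κ ι ℝ} (hA : ∀ i j, 0 ≤ A i j) {v : ι → ℝ} (hv : 0 ≤ v) :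
    0 ≤ A *ᵥ v :=
  fun i => Finset.sum_nonneg fun j _ => mul_nonneg (hA i j) (hv j)

theorem mulVec_mono {A : Matrix κ ι ℝ} (hA : ∀ i j, 0 ≤ A i j) {v w : ι → ℝ} (hvw : v ≤ w) :
    A *ᵥ v ≤ A *ᵥ w :=
  fun i => Finset.sum_le_sum fun j _ => mul_le_mul_of_nonneg_left (hvw j) (hA i j)

theorem inv_diagonal_of_ne_zero [DecidableEq ι] {d : ι → ℝ} (hd : ∀ i, d i ≠ 0) :
    (diagonal d)⁻¹ = diagonal d⁻¹ :=
  inv_eq_left_inv <| by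
    rw [diagonal_mul_diagonal, ← diagonal_one]
    exact congrArg _ (funext fun i => inv_mul_cancel₀ (hd i))

theorem diag_nonpos_of_sum_col_eq_zero {A : Matrix ι ι ℝ} (hA : ∀ i j, i ≠ j → 0 ≤ A i j)
    (hcol : ∀ j, ∑ i, A i j = 0) (j : ι) : A j j ≤ 0 := by
  classical
  have h := hcol j
  rw [← Finset.add_sum_erase _ _ (Finset.mem_univ j)] at h
  linarith [Finset.sum_nonneg (s := Finset.univ.erase j) fun i hi =>
    hA i j (Finset.ne_of_mem_erase hi)]

theorem exists_nonneg_smul_le_mulVec_of_mem_spectrum [DecidableEq ι] {A : Matrix ι ι ℝ}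
    (hA : ∀ i j, 0 ≤ A i j) {μ : ℂ} (hμ : μ ∈ spectrum ℂ (A.map (algebraMap ℝ ℂ))) :
    ∃ u : ι → ℝ, 0 ≤ u ∧ u ≠ 0 ∧ ‖μ‖ • u ≤ A *ᵥ u := by
  rw [← spectrum_toLin', ← Module.End.hasEigenvalue_iff_mem_spectrum] at hμ
  obtain ⟨v, hv⟩ := hμ.exists_hasEigenvector
  have heig : (A.map (algebraMap ℝ ℂ)) *ᵥ v = μ • v := by
    simpa [toLin'_apply] using hv.apply_eq_smul
  refine ⟨fun i => ‖v i‖, fun i => norm_nonneg _, fun h => hv.2 (funext fun i => ?_), fun i => ?_⟩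
  · simpa using congrFun h i
  calc ‖μ‖ * ‖v i‖ = ‖∑ j, (A i j : ℂ) * v j‖ := by
        rw [← norm_mul, ← smul_eq_mul, ← Pi.smul_apply, ← heig]; rfl
    _ ≤ ∑ j, ‖(A i j : ℂ) * v j‖ := norm_sum_le _ _
    _ = ∑ j, A i j * ‖v j‖ := by
        simp only [norm_mul, Complex.norm_real, Real.norm_of_nonneg (hA i _)]

theorem eq_zero_of_pow_apply_pos [DecidableEq ι] {F : Matrix ι ι ℝ} (hF : ∀ i j, 0 ≤ F i j)
    {z : ι → ℝ} (hz : 0 ≤ z) (hzF : ∀ i, z i = 0 → (F *ᵥ z) i = 0) :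
    ∀ (k : ℕ) {i j : ι}, z i = 0 → 0 < (F ^ k) i j → z j = 0
  | 0, i, j, hi, hk => by
    obtain rfl : i = j := by by_contra h; simp [one_apply_ne h] at hk
    exact hi
  | k + 1, i, j, hi, hk => by
    rw [pow_succ, mul_apply] at hk
    obtain ⟨l, -, hl⟩ := Finset.exists_lt_of_sum_lt (s := Finset.univ) (f := fun _ ↦ 0)
      (g := fun l ↦ (F ^ k) i l * F l j) (by simpa using hk)
    have hkl : 0 < (F ^ k) i l := pos_of_mul_pos_left hl (hF l j)
    have hzl : z l = 0 := eq_zero_of_pow_apply_pos hF hz hzF k hi hkl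
    have hterms := (Finset.sum_eq_zero_iff_of_nonneg fun j _ => mul_nonneg (hF l j) (hz j)).mp
      (hzF l hzl) j (Finset.mem_univ j)
    exact (mul_eq_zero.mp hterms).resolve_left (pos_of_mul_pos_right hl hkl.le).ne'

theorem sum_mulVec_le_of_sum_col_le {A : Matrix ι ι ℝ} {θ : ℝ} (hcol : ∀ j, ∑ i, A i j ≤ θ)
    {v : ι → ℝ} (hv : 0 ≤ v) : ∑ i, (A *ᵥ v) i ≤ θ * ∑ j, v j := by
  calc ∑ i, (A *ᵥ v) i = ∑ j, (∑ i, A i j) * v j := by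
        simp only [mulVec, dotProduct, Finset.sum_mul]
        exact Finset.sum_comm
    _ ≤ ∑ j, θ * v j := Finset.sum_le_sum fun j _ => mul_le_mul_of_nonneg_right (hcol j) (hv j)
    _ = θ * ∑ j, v j := (Finset.mul_sum _ _ _).symm

theorem sum_col_pow_le [DecidableEq ι] {A : Matrix ι ι ℝ} (hA : ∀ i j, 0 ≤ A i j) {θ : ℝ}
    (hθ : 0 ≤ θ) (hcol : ∀ j, ∑ i, A i j ≤ θ) (p : ℕ) (j : ι) : ∑ i, (A ^ p) i j ≤ θ ^ p := by
  induction p with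
  | zero => simp [one_apply]
  | succ p ih =>
    calc ∑ i, (A ^ (p + 1)) i j = ∑ i, (A *ᵥ fun l => (A ^ p) l j) i := by
          simp only [pow_succ', mul_apply, mulVec, dotProduct]
      _ ≤ θ * ∑ l, (A ^ p) l j :=
          sum_mulVec_le_of_sum_col_le hcol fun l => pow_apply_nonneg hA p l j
      _ ≤ θ ^ (p + 1) := by rw [pow_succ']; exact mul_le_mul_of_nonneg_left ih hθ

/-- `y` is a truncated Neumann series `∑_{p<N} Q ^ p (c + 1)`: column sums below `1` make
`Q ^ N (c + 1) < 1` for large `N`. -/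
theorem exists_add_mulVec_lt_of_sum_col_lt_one [DecidableEq ι] {Q : Matrix ι ι ℝ}
    (hQ : ∀ i j, 0 ≤ Q i j) (hcol : ∀ j, ∑ i, Q i j < 1) {c : ι → ℝ} (hc : 0 ≤ c) :
    ∃ y, 0 ≤ y ∧ ∀ i, c i + (Q *ᵥ y) i < y i := by
  obtain ⟨θ, hθ0, hθ1, hθ⟩ : ∃ θ : ℝ, 0 ≤ θ ∧ θ < 1 ∧ ∀ j, ∑ i, Q i j ≤ θ := by
    rcases isEmpty_or_nonempty ι with _ | _
    · exact ⟨0, le_rfl, zero_lt_one, isEmptyElim⟩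
    obtain ⟨j₀, hj₀⟩ := Finite.exists_max fun j => ∑ i, Q i j
    exact ⟨_, Finset.sum_nonneg fun i _ => hQ i j₀, hcol j₀, hj₀⟩
  set e : ι → ℝ := c + 1
  have he : 0 ≤ e := add_nonneg hc zero_le_one
  have hsum : 0 < ∑ i, e i + 1 := by
    linarith [Finset.sum_nonneg fun i (_ : i ∈ Finset.univ) => he i]
  obtain ⟨N, hN⟩ := exists_pow_lt_of_lt_one (inv_pos.mpr hsum) hθ1
  have hQN : ∀ i, (Q ^ N *ᵥ e) i < 1 := fun i => calc
    (Q ^ N *ᵥ e) i ≤ ∑ i, (Q ^ N *ᵥ e) i :=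
      Finset.single_le_sum (fun i _ => mulVec_nonneg (pow_apply_nonneg hQ N) he i)
        (Finset.mem_univ i)
    _ ≤ θ ^ N * ∑ i, e i := sum_mulVec_le_of_sum_col_le (sum_col_pow_le hQ hθ0 hθ N) he
    _ ≤ θ ^ N * (∑ i, e i + 1) := by gcongr; linarith
    _ < 1 := (lt_inv_mul_iff₀' hsum).mp (by rwa [mul_one])
  set S := ∑ p ∈ Finset.range N, Q ^ p
  have hS : S - Q * S = 1 - Q ^ N := by rw [← mul_neg_geom_sum]; noncomm_ring
  refine ⟨S *ᵥ e, mulVec_nonneg (fun i j => ?_) he, fun i => ?_⟩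
  · simp only [S, sum_apply]
    exact Finset.sum_nonneg fun p _ => pow_apply_nonneg hQ p i j
  have hSe := congrFun (congrArg (· *ᵥ e) hS) i
  simp only [sub_mulVec, ← mulVec_mulVec, one_mulVec, Pi.sub_apply, e, Pi.add_apply,
    Pi.one_apply] at hSe
  linarith [hQN i]

theorem exists_pos_add_mulVec_le_of_sum_col_lt [DecidableEq ι] {G : Matrix ι ι ℝ}
    (hG : ∀ i j, 0 ≤ G i j) {d : ι → ℝ} (hcol : ∀ j, ∑ i, G i j < d j)
    {c : ι → ℝ} (hc : 0 ≤ c) :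
    ∃ w : ι → ℝ, (∀ i, 0 < w i) ∧ ∀ i, c i + (G *ᵥ w) i ≤ d i * w i := by
  have hd (j : ι) : 0 < d j := (Finset.sum_nonneg fun i _ => hG i j).trans_lt (hcol j)
  have hQ : ∀ i j, 0 ≤ (G * diagonal d⁻¹) i j := fun i j => by
    simpa using mul_nonneg (hG i j) (inv_nonneg.2 (hd j).le)
  have hQcol : ∀ j, ∑ i, (G * diagonal d⁻¹) i j < 1 := fun j => by
    simp only [mul_diagonal, Pi.inv_apply, ← Finset.sum_mul]
    rw [← div_eq_mul_inv, div_lt_one (hd j)]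
    exact hcol j
  obtain ⟨y, hy, hcy⟩ := exists_add_mulVec_lt_of_sum_col_lt_one hQ hQcol hc
  refine ⟨diagonal d⁻¹ *ᵥ y, fun i => ?_, fun i => ?_⟩
  · simp only [mulVec_diagonal, Pi.inv_apply]
    have hQy : (0 : ℝ) ≤ _ := mulVec_nonneg hQ hy i
    have hci : (0 : ℝ) ≤ c i := hc i
    exact mul_pos (inv_pos.2 (hd i)) (by linarith [hcy i])
  · rw [mulVec_mulVec, mulVec_diagonal, Pi.inv_apply, mul_inv_cancel_left₀ (hd i).ne']
    exact (hcy i).le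

end

end Matrix

theorem MatIrred.pos_of_ne_zero {ι : Type*} [Fintype ι] [DecidableEq ι] {F : Matrix ι ι ℝ}
    (hirr : MatIrred F) (hF : ∀ i j, 0 ≤ F i j) {z : ι → ℝ} (hz : 0 ≤ z) (hz0 : z ≠ 0)
    (hzF : ∀ i, z i = 0 → (F *ᵥ z) i = 0) (i : ι) : 0 < z i := by
  obtain ⟨j, hj⟩ := Function.ne_iff.mp hz0
  refine (hz i).lt_of_ne' fun hi => hj ?_
  obtain ⟨k, -, hk⟩ := hirr i j
  exact eq_zero_of_pow_apply_pos hF hz hzF k hi hk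

section
variable {ι : Type*} [Fintype ι]

/-- The equilibrium equation `d i * z i = (1 - χ i * z i) * (F *ᵥ z) i`, solved for `z i`. -/
noncomputable def equilibriumMap (F : Matrix ι ι ℝ) (d χ z : ι → ℝ) : ι → ℝ :=
  fun i => (F *ᵥ z) i / (d i + χ i * (F *ᵥ z) i)

variable {F : Matrix ι ι ℝ} {d χ : ι → ℝ}

theorem equilibriumMap_mono (hF : ∀ i j, 0 ≤ F i j) (hd : ∀ i, 0 < d i) (hχ : 0 ≤ χ)
    {z z' : ι → ℝ} (hz : 0 ≤ z) (hzz' : z ≤ z') :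
    equilibriumMap F d χ z ≤ equilibriumMap F d χ z' :=
  fun i => div_add_mul_le_div_add_mul (mulVec_nonneg hF hz i) (mulVec_mono hF hzz' i) (hd i)
    (hχ i)

theorem eventually_smul_le_equilibriumMap (hd : ∀ i, 0 < d i) (hχ : 0 ≤ χ) {r : ℝ} (hr : 1 < r)
    {u : ι → ℝ} (hu : 0 ≤ u) (hsub : ∀ i, r * (d i * u i) ≤ (F *ᵥ u) i) :
    ∀ᶠ ε in 𝓝[>] (0 : ℝ), ε • u ≤ equilibriumMap F d χ (ε • u) := by
  have hsmall : ∀ᶠ ε in 𝓝 (0 : ℝ), ∀ i, χ i * (r * (ε * u i)) < r - 1 :=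
    eventually_all.2 fun i => Tendsto.eventually_lt_const (by linarith) <|
      Continuous.tendsto' (f := fun ε : ℝ => χ i * (r * (ε * u i))) (by fun_prop) 0 0 (by simp)
  filter_upwards [self_mem_nhdsWithin, nhdsWithin_le_nhds hsmall] with ε (hε : 0 < ε) hε' i
  simp only [equilibriumMap, mulVec_smul, Pi.smul_apply, smul_eq_mul]
  exact le_div_add_mul_of_le (mul_nonneg hε.le (hu i)) (hd i) (hχ i) (by linarith)
    (by nlinarith [hsub i]) (hε' i).le

theorem mul_add_eq_of_equilibriumMap_eq (hF : ∀ i j, 0 ≤ F i j) (hd : ∀ i, 0 < d i)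
    (hχ : 0 ≤ χ) {z : ι → ℝ} (hz : 0 ≤ z) (hTz : equilibriumMap F d χ z = z) (i : ι) :
    z i * (d i + χ i * (F *ᵥ z) i) = (F *ᵥ z) i := by
  have hpos : 0 < d i + χ i * (F *ᵥ z) i := by
    have := mul_nonneg (hχ i) (mulVec_nonneg hF hz i); linarith [hd i]
  rw [← congrFun hTz i, equilibriumMap, div_mul_cancel₀ _ hpos.ne']

theorem equilibriumMap_apply_lt_one (hF : ∀ i j, 0 ≤ F i j) (hd : ∀ i, 0 < d i) {z : ι → ℝ}
    (hz : 0 ≤ z) {i : ι} (hχi : χ i = 1) : equilibriumMap F d χ z i < 1 := by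
  have hs : (0 : ℝ) ≤ _ := mulVec_nonneg hF hz i
  rw [equilibriumMap, hχi, one_mul, div_lt_one (by linarith [hd i])]
  linarith [hd i]

theorem mulVec_eq_zero_of_equilibriumMap_eq [DecidableEq ι] (hF : ∀ i j, 0 ≤ F i j)
    (hd : ∀ i, 0 < d i) (hχ : 0 ≤ χ) {z : ι → ℝ} (hz : 0 ≤ z)
    (hTz : equilibriumMap F d χ z = z) :
    (-diagonal d + (1 - diagonal (χ * z)) * F) *ᵥ z = 0 := by
  ext i
  have := mul_add_eq_of_equilibriumMap_eq hF hd hχ hz hTz i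
  simp only [add_mulVec, neg_mulVec, Matrix.sub_mul, Matrix.one_mul, sub_mulVec,
    ← mulVec_mulVec, mulVec_diagonal, Pi.add_apply, Pi.neg_apply, Pi.sub_apply, Pi.mul_apply,
    Pi.zero_apply]
  linarith

theorem exists_pos_equilibriumMap_eq [DecidableEq ι] (hF : ∀ i j, 0 ≤ F i j)
    (hirr : MatIrred F) (hd : ∀ i, 0 < d i) (hχ : 0 ≤ χ) (hρ : 1 < specRad (diagonal d⁻¹ * F))
    {b : ι → ℝ} (hb : ∀ i, 0 < b i) (hTb : equilibriumMap F d χ b ≤ b) :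
    ∃ z, (∀ i, 0 < z i) ∧ equilibriumMap F d χ z = z := by
  obtain ⟨μ, hμ, hμ1⟩ := exists_mem_spectrum_one_lt_norm hρ
  obtain ⟨u, hu, hu0, hAu⟩ := exists_nonneg_smul_le_mulVec_of_mem_spectrum
    (fun i j => by simpa using mul_nonneg (inv_nonneg.2 (hd i).le) (hF i j)) hμ
  have hsub : ∀ i, ‖μ‖ * (d i * u i) ≤ (F *ᵥ u) i := fun i => by
    have := hAu i
    simp only [Pi.smul_apply, smul_eq_mul, ← mulVec_mulVec, mulVec_diagonal, Pi.inv_apply] at this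
    rw [mul_left_comm, ← le_inv_mul_iff₀ (hd i)]
    exact this
  have hle_b : ∀ᶠ ε in 𝓝 (0 : ℝ), ε • u ≤ b := by
    refine (eventually_all.2 fun i => Tendsto.eventually_lt_const (hb i) ?_).mono
      fun ε h i => (h i).le
    exact Continuous.tendsto' (f := fun ε : ℝ => ε * u i) (by fun_prop) 0 0 (by simp)
  obtain ⟨ε, hεT, hεb, hε⟩ := ((eventually_smul_le_equilibriumMap hd hχ hμ1 hu hsub).and
    ((hle_b.filter_mono nhdsWithin_le_nhds).and self_mem_nhdsWithin)).exists
  have hl : 0 ≤ ε • u := smul_nonneg hε.le hu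
  obtain ⟨z, ⟨hlz, hzb⟩, hTz⟩ := exists_fixedPoint_of_monotoneOn_Icc hεb
    (fun z hz z' _ hzz' => equilibriumMap_mono hF hd hχ (hl.trans hz.1) hzz') hεT hTb
  refine ⟨z, hirr.pos_of_ne_zero hF (hl.trans hlz) ?_ fun i hi => ?_, hTz⟩
  · rintro rfl
    exact smul_ne_zero hε.ne' hu0 (le_antisymm hlz hl)
  · simpa [hi] using (mul_add_eq_of_equilibriumMap_eq hF hd hχ (hl.trans hlz) hTz i).symm

end

section
variable (δ : Fin n → ℝ) (δw : Fin m → ℝ) (B : Matrix (Fin n) (Fin n) ℝ)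
  (Bw : Matrix (Fin n) (Fin m) ℝ) (Cw : Matrix (Fin m) (Fin n) ℝ) (Aw : Matrix (Fin m) (Fin m) ℝ)

theorem DfM_eq_diagonal :
    DfM δ δw Aw = diagonal (Sum.elim δ fun j => δw j - Aw j j) := by
  rw [DfM, ← fromBlocks_diagonal]

theorem XzM_eq_diagonal (z : Fin n ⊕ Fin m → ℝ) :
    XzM z = diagonal (Sum.elim (1 : Fin n → ℝ) 0 * z) := by
  rw [XzM]
  congr 1
  ext (i | j) <;> simp

variable {δ δw B Bw Cw Aw}

theorem BfM_nonneg (hB : ∀ i j, 0 ≤ B i j) (hBw : ∀ i j, 0 ≤ Bw i j) (hCw : ∀ i j, 0 ≤ Cw i j)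
    (hAw : ∀ i j, i ≠ j → 0 ≤ Aw i j) : ∀ i j, 0 ≤ BfM B Bw Cw Aw i j := by
  rintro (i | i) (j | j)
  · exact hB i j
  · exact hBw i j
  · exact hCw i j
  · by_cases h : i = j
    · simp [BfM, h]
    · simpa [BfM, h] using hAw i j h

theorem exists_equilibriumMap_BfM_le (hF : ∀ i j, 0 ≤ BfM B Bw Cw Aw i j)
    (hδ : ∀ i, 0 < δ i) (hδw : ∀ j, 0 < δw j) (hAwcol : ∀ j, ∑ i, Aw i j = 0) :
    ∃ b, (∀ i, 0 < b i) ∧ equilibriumMap (BfM B Bw Cw Aw) (Sum.elim δ fun j => δw j - Aw j j)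
      (Sum.elim 1 0 : Fin n ⊕ Fin m → ℝ) b ≤ b := by
  have hcol : ∀ j, ∑ i, (Aw - diagonal fun j => Aw j j) i j < δw j - Aw j j := fun j => by
    simp [Matrix.sub_apply, Finset.sum_sub_distrib, diagonal_apply, hAwcol, hδw j]
  obtain ⟨w, hw, hcw⟩ := exists_pos_add_mulVec_le_of_sum_col_lt
    (G := Aw - diagonal fun j => Aw j j) (fun i j => hF (.inr i) (.inr j))
    hcol (mulVec_nonneg (A := Cw) (fun i j => hF (.inr i) (.inl j)) zero_le_one)
  refine ⟨Sum.elim 1 w, by rintro (i | j); exacts [one_pos, hw j], ?_⟩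
  rintro (i | j)
  · have hs : (0 : ℝ) ≤ _ := mulVec_nonneg hF (v := Sum.elim 1 w)
      (by rintro (i | j); exacts [zero_le_one, (hw j).le]) (.inl i)
    simp only [equilibriumMap, Sum.elim_inl, Pi.one_apply, one_mul]
    exact div_le_one_of_le₀ (by linarith [hδ i]) (by linarith [hδ i])
  · have hdw : 0 < δw j - Aw j j := by
      linarith [(Finset.sum_nonneg fun i _ => hF (.inr i) (.inr j)).trans_lt (hcol j)]
    simp only [equilibriumMap, Sum.elim_inr, Pi.zero_apply, zero_mul, add_zero]
    rw [div_le_iff₀ hdw, BfM, fromBlocks_mulVec]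
    simpa [mul_comm] using hcw j

end

theorem siws_endemic_exists_general {n m : ℕ}
    (δ : Fin n → ℝ) (δw : Fin m → ℝ)
    (B : Matrix (Fin n) (Fin n) ℝ) (Bw : Matrix (Fin n) (Fin m) ℝ)
    (Cw : Matrix (Fin m) (Fin n) ℝ) (Aw : Matrix (Fin m) (Fin m) ℝ)
    (hδ : ∀ i, 0 < δ i) (hδw : ∀ j, 0 < δw j)
    (hB : ∀ i j, 0 ≤ B i j) (hBw : ∀ i j, 0 ≤ Bw i j) (hCw : ∀ i j, 0 ≤ Cw i j)
    (hAw : ∀ i j, i ≠ j → 0 ≤ Aw i j)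
    (hAwcol : ∀ j, ∑ i, Aw i j = 0)
    (hirr : MatIrred (BfM B Bw Cw Aw))
    (hρ : 1 < specRad ((DfM δ δw Aw)⁻¹ * BfM B Bw Cw Aw)) :
    ∃ zt : Fin n ⊕ Fin m → ℝ,
      (∀ i, 0 < zt i) ∧ (∀ i : Fin n, zt (Sum.inl i) < 1) ∧
      (-(DfM δ δw Aw) +
        ((1 : Matrix (Fin n ⊕ Fin m) (Fin n ⊕ Fin m) ℝ) - XzM zt) * BfM B Bw Cw Aw) *ᵥ zt = 0 := by
  have hF := BfM_nonneg hB hBw hCw hAw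
  have hd : ∀ i, 0 < Sum.elim δ (fun j => δw j - Aw j j) i := by
    rintro (i | j)
    · exact hδ i
    · exact sub_pos.2 ((diag_nonpos_of_sum_col_eq_zero hAw hAwcol j).trans_lt (hδw j))
  have hχ : (0 : Fin n ⊕ Fin m → ℝ) ≤ Sum.elim (1 : Fin n → ℝ) 0 := by rintro (i | j) <;> simp
  rw [DfM_eq_diagonal, Matrix.inv_diagonal_of_ne_zero fun i => (hd i).ne'] at hρ
  obtain ⟨b, hb, hTb⟩ := exists_equilibriumMap_BfM_le hF hδ hδw hAwcol
  obtain ⟨z, hz, hTz⟩ := exists_pos_equilibriumMap_eq hF hirr hd hχ hρ hb hTb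
  refine ⟨z, hz, fun i => ?_, ?_⟩
  · rw [← hTz]
    exact equilibriumMap_apply_lt_one hF hd (fun i => (hz i).le) rfl
  · rw [DfM_eq_diagonal, XzM_eq_diagonal]
    exact mulVec_eq_zero_of_equilibriumMap_eq hF hd hχ (fun i => (hz i).le) hTz

/-- existence of a strictly positive (endemic) equilibrium in `𝒟` when
`ρ(D_f⁻¹ B_f) > 1` (part of Theorem 2). -/
theorem siws_endemic_exists {n m : ℕ} (hn : 0 < n) (hm : 0 < m)
    (δ : Fin n → ℝ) (δw : Fin m → ℝ)
    (B : Matrix (Fin n) (Fin n) ℝ) (Bw : Matrix (Fin n) (Fin m) ℝ)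
    (Cw : Matrix (Fin m) (Fin n) ℝ) (Aw : Matrix (Fin m) (Fin m) ℝ)
    (hδ : ∀ i, 0 < δ i) (hδw : ∀ j, 0 < δw j)
    (hB : ∀ i j, 0 ≤ B i j) (hBw : ∀ i j, 0 ≤ Bw i j) (hCw : ∀ i j, 0 ≤ Cw i j)
    (hAw : ∀ i j, i ≠ j → 0 ≤ Aw i j)
    (hAwcol : ∀ j, ∑ i, Aw i j = 0)
    (hirr : MatIrred (BfM B Bw Cw Aw))
    (hρ : 1 < specRad ((DfM δ δw Aw)⁻¹ * BfM B Bw Cw Aw)) :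
    ∃ zt : Fin n ⊕ Fin m → ℝ,
      (∀ i, 0 < zt i) ∧ (∀ i : Fin n, zt (Sum.inl i) < 1) ∧
      (-(DfM δ δw Aw) +
        ((1 : Matrix (Fin n ⊕ Fin m) (Fin n ⊕ Fin m) ℝ) - XzM zt) * BfM B Bw Cw Aw) *ᵥ zt = 0 :=
  siws_endemic_exists_general δ δw B Bw Cw Aw hδ hδw hB hBw hCw hAw hAwcol hirr hρ
end

section
/- Let Ψ ∈ ℝ^{N×N} be symmetric and negative semidefinite, with all off-diagonal entries nonnegative, and suppose there exists c ≥ 0 such that Ψ + cI is a nonnegative irreducible matrix. Then for every z ∈ ℝ^N with z ≥ 0, z ≠ 0, and z_i = 0 for at least one index i, one has zᵀΨz < 0. (This is the key quadratic-form estimate in the proof of global asymptotic stability of the healthy state for the case ρ(D_f^{-1}B_f) = 1.) -/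
open Matrix

variable {n m : ℕ}

/-!
If `zᵀ Ψ z = 0`, then `z` lies in the kernel of the positive semidefinite matrix `-Ψ`, so `z` is
a nonnegative eigenvector, with eigenvalue `c`, of the irreducible nonnegative matrix
`M = Ψ + c I`. Such an eigenvector is strictly positive, contradicting the zero entry of `z`:
for every `i` pick `j` with `z j > 0` and `k` with `(M ^ k) i j > 0`; then
`c ^ k * z i = (M ^ k *ᵥ z) i ≥ (M ^ k) i j * z j > 0`.
-/

namespace Matrix

variable {ι : Type*} [Fintype ι]

theorem posSemidef_neg_of_dotProduct_mulVec_nonpos {A : Matrix ι ι ℝ} (hsym : Aᵀ = A)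
    (hnsd : ∀ v : ι → ℝ, v ⬝ᵥ (A *ᵥ v) ≤ 0) : (-A).PosSemidef := by
  refine posSemidef_iff_dotProduct_mulVec.mpr ⟨?_, fun v => ?_⟩
  · simpa [IsHermitian, conjTranspose_neg] using hsym
  · simpa [neg_mulVec] using hnsd v

theorem mulVec_eq_zero_of_dotProduct_mulVec_eq_zero {A : Matrix ι ι ℝ} (hsym : Aᵀ = A)
    (hnsd : ∀ v : ι → ℝ, v ⬝ᵥ (A *ᵥ v) ≤ 0) {z : ι → ℝ} (hz : z ⬝ᵥ (A *ᵥ z) = 0) :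
    A *ᵥ z = 0 := by
  have hneg := (posSemidef_neg_of_dotProduct_mulVec_nonpos hsym hnsd).dotProduct_mulVec_zero_iff z
  simpa [neg_mulVec, hz] using hneg

theorem pow_mulVec_of_mulVec_eq_smul [DecidableEq ι] {R : Type*} [CommSemiring R]
    {M : Matrix ι ι R} {z : ι → R} {c : R} (h : M *ᵥ z = c • z) (k : ℕ) :
    (M ^ k) *ᵥ z = c ^ k • z := by
  induction k with
  | zero => simp
  | succ k ih => rw [pow_succ, ← mulVec_mulVec, h, mulVec_smul, ih, smul_smul, pow_succ']

theorem mulVec_apply_pos_of_nonneg {R : Type*} [CommSemiring R] [PartialOrder R]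
    [IsStrictOrderedRing R] {M : Matrix ι ι R} {z : ι → R} (hM : ∀ i j, 0 ≤ M i j)
    (hz : ∀ j, 0 ≤ z j) {i j : ι} (hij : 0 < M i j) (hj : 0 < z j) : 0 < (M *ᵥ z) i :=
  (mul_pos hij hj).trans_le <|
    Finset.single_le_sum (f := fun l => M i l * z l)
      (fun l _ => mul_nonneg (hM i l) (hz l)) (Finset.mem_univ j)

end Matrix

open Matrix in
theorem MatIrred.pos_of_mulVec_eq_smul {ι : Type*} [Fintype ι] [DecidableEq ι]
    {M : Matrix ι ι ℝ} (hirr : MatIrred M) (hM : ∀ i j, 0 ≤ M i j) {z : ι → ℝ}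
    (hz : ∀ i, 0 ≤ z i) (hz0 : z ≠ 0) {c : ℝ} (hMz : M *ᵥ z = c • z) (i : ι) : 0 < z i := by
  obtain ⟨j, hj⟩ : ∃ j, 0 < z j := by
    by_contra! h
    exact hz0 (funext fun j => (h j).antisymm (hz j))
  obtain ⟨k, -, hk⟩ := hirr i j
  have hpos := mulVec_apply_pos_of_nonneg (pow_apply_nonneg hM k) hz hk hj
  rw [pow_mulVec_of_mulVec_eq_smul hMz, Pi.smul_apply, smul_eq_mul] at hpos
  exact (hz i).lt_of_ne fun hzi => by simp [← hzi] at hpos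

theorem metzler_psd_quadratic_form_neg_general {N : ℕ}
    (Ψ : Matrix (Fin N) (Fin N) ℝ)
    (hsym : Ψᵀ = Ψ)
    (hnsd : ∀ v : Fin N → ℝ, v ⬝ᵥ (Ψ *ᵥ v) ≤ 0)
    (hirr : ∃ c : ℝ, 0 ≤ c ∧
      (∀ i j, 0 ≤ (Ψ + c • (1 : Matrix (Fin N) (Fin N) ℝ)) i j) ∧
      MatIrred (Ψ + c • (1 : Matrix (Fin N) (Fin N) ℝ)))
    (z : Fin N → ℝ) (hz : ∀ i, 0 ≤ z i) (hz0 : z ≠ 0) (hzero : ∃ i, z i = 0) :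
    z ⬝ᵥ (Ψ *ᵥ z) < 0 := by
  obtain ⟨c, -, hnonneg, hMirr⟩ := hirr
  refine (hnsd z).lt_of_ne fun hform => ?_
  have hΨz : Ψ *ᵥ z = 0 := mulVec_eq_zero_of_dotProduct_mulVec_eq_zero hsym hnsd hform
  have hMz : (Ψ + c • 1) *ᵥ z = c • z := by
    rw [add_mulVec, hΨz, zero_add, smul_mulVec, one_mulVec]
  obtain ⟨i, hi⟩ := hzero
  exact (hMirr.pos_of_mulVec_eq_smul hnonneg hz hz0 hMz i).ne' hi

/-- the key quadratic-form estimate: a symmetric negative semidefinite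
irreducible Metzler matrix satisfies `zᵀ Ψ z < 0` for every nonnegative nonzero `z`
having at least one zero entry. -/
theorem metzler_psd_quadratic_form_neg {N : ℕ} (hN : 0 < N)
    (Ψ : Matrix (Fin N) (Fin N) ℝ)
    (hsym : Ψᵀ = Ψ)
    (hnsd : ∀ v : Fin N → ℝ, v ⬝ᵥ (Ψ *ᵥ v) ≤ 0)
    (hmetzler : ∀ i j, i ≠ j → 0 ≤ Ψ i j)
    (hirr : ∃ c : ℝ, 0 ≤ c ∧
      (∀ i j, 0 ≤ (Ψ + c • (1 : Matrix (Fin N) (Fin N) ℝ)) i j) ∧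
      MatIrred (Ψ + c • (1 : Matrix (Fin N) (Fin N) ℝ)))
    (z : Fin N → ℝ) (hz : ∀ i, 0 ≤ z i) (hz0 : z ≠ 0) (hzero : ∃ i, z i = 0) :
    z ⬝ᵥ (Ψ *ᵥ z) < 0 :=
  metzler_psd_quadratic_form_neg_general Ψ hsym hnsd hirr z hz hz0 hzero
end
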